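/- arXiv:2507.22589 — 2 statements merged into one kernel-verified Lean document; each statement's English description precedes it below -/
import Mathlib

section
/- Let V be a finite type, k ≥ 1, and f : Finset V → ℝ a monotone submodular set function. Suppose S ⊆ V is any finite set and v* ∈ V maximizes the marginal gain f(S ∪ {v}) − f(S) over all v ∈ V. Then for every T ⊆ V with |T| ≤ k, f(S ∪ {v*}) − f(S) ≥ (f(T) − f(S)) / k; i.e., each greedy step closes at least a 1/k fraction of the gap to the optimum. -/
/-!
Adding the elements of `T` to `S` one at a time, submodularity bounds each increment by a
marginal gain at `S`, hence by the greedy gain `g`; with monotonicity,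
`f T - f S ≤ f (S ∪ T) - f S ≤ |T| g ≤ k g`.
-/

open Finset

section

variable {V β : Type*} [DecidableEq V] [AddCommGroup β] [PartialOrder β] [IsOrderedAddMonoid β]

theorem sub_le_card_nsmul_of_marginal_le {f : Finset V → β}
    (hsub : ∀ S T : Finset V, S ⊆ T → ∀ u ∉ T, f (insert u S) - f S ≥ f (insert u T) - f T)
    {S : Finset V} {g : β} (hgain : ∀ v, f (insert v S) - f S ≤ g) (A : Finset V) :
    f (S ∪ A) - f S ≤ #A • g := by
  induction A using Finset.induction_on with
  | empty => simp
  | insert a A haA ih =>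
    rw [union_insert, card_insert_of_notMem haA, succ_nsmul]
    by_cases ha : a ∈ S ∪ A
    · have haS : a ∈ S := by simpa [haA] using ha
      have hg : 0 ≤ g := by simpa [insert_eq_of_mem haS] using hgain a
      rw [insert_eq_of_mem ha]
      exact le_add_of_le_of_nonneg ih hg
    · calc f (insert a (S ∪ A)) - f S
          = (f (S ∪ A) - f S) + (f (insert a (S ∪ A)) - f (S ∪ A)) := by abel
        _ ≤ #A • g + g :=
          add_le_add ih ((hsub S (S ∪ A) subset_union_left a ha).trans (hgain a))

theorem sub_le_card_nsmul_of_monotone_of_marginal_le {f : Finset V → β}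
    (hmono : ∀ S T : Finset V, S ⊆ T → f S ≤ f T)
    (hsub : ∀ S T : Finset V, S ⊆ T → ∀ u ∉ T, f (insert u S) - f S ≥ f (insert u T) - f T)
    {S : Finset V} {g : β} (hgain : ∀ v, f (insert v S) - f S ≤ g) (T : Finset V) :
    f T - f S ≤ #T • g :=
  (sub_le_sub_right (hmono T (S ∪ T) subset_union_right) _).trans
    (sub_le_card_nsmul_of_marginal_le hsub hgain T)

end

theorem greedy_step_gap_general {V : Type*} [DecidableEq V]
    (k : ℕ)
    (f : Finset V → ℝ)
    (hmono : ∀ S T : Finset V, S ⊆ T → f S ≤ f T)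
    (hsub : ∀ S T : Finset V, S ⊆ T → ∀ u ∉ T,
      f (insert u S) - f S ≥ f (insert u T) - f T)
    (S : Finset V) (vstar : V)
    (hmax : ∀ v : V, f (insert v S) - f S ≤ f (insert vstar S) - f S)
    (T : Finset V) (hT : T.card ≤ k) :
    f (insert vstar S) - f S ≥ (f T - f S) / k := by
  set g := f (insert vstar S) - f S
  have hg : 0 ≤ g := sub_nonneg.2 (hmono _ _ (subset_insert _ _))
  have hgap : f T - f S ≤ g * k :=
    calc f T - f S ≤ #T • g := sub_le_card_nsmul_of_monotone_of_marginal_le hmono hsub hmax T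
      _ = #T * g := nsmul_eq_mul _ _
      _ ≤ k * g := mul_le_mul_of_nonneg_right (by exact_mod_cast hT) hg
      _ = g * k := mul_comm _ _
  -- also covers `k = 0`, where `(f T - f S) / k` is the junk value `0`
  exact div_le_of_le_mul₀ k.cast_nonneg hg hgap

/-- Per-step progress of the greedy algorithm: if `v*` maximizes the marginal gain
of `f` with respect to `S`, then for every `T` of cardinality at most `k`, the
greedy step closes at least a `1/k` fraction of the gap `f T - f S`. -/
theorem greedy_step_gap {V : Type*} [Fintype V] [DecidableEq V]
    (k : ℕ) (hk : 1 ≤ k)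
    (f : Finset V → ℝ)
    (hmono : ∀ S T : Finset V, S ⊆ T → f S ≤ f T)
    (hsub : ∀ S T : Finset V, S ⊆ T → ∀ u ∉ T,
      f (insert u S) - f S ≥ f (insert u T) - f T)
    (S : Finset V) (vstar : V)
    (hmax : ∀ v : V, f (insert v S) - f S ≤ f (insert vstar S) - f S)
    (T : Finset V) (hT : T.card ≤ k) :
    f (insert vstar S) - f S ≥ (f T - f S) / k :=
  greedy_step_gap_general k f hmono hsub S vstar hmax T hT
end

section
/- Let V be a finite type, f : Finset V → ℝ a monotone submodular set function with f(∅) = 0, and k ≥ 1 with k ≤ |V|. Let S_0 = ∅ and, for 0 ≤ i < k, let S_{i+1} = S_i ∪ {v_i} where v_i ∈ V maximizes the marginal gain f(S_i ∪ {v}) − f(S_i) over all v ∈ V. Then for every T ⊆ V with |T| ≤ k, f(S_k) ≥ (1 − 1/e) · f(T); that is, the greedy algorithm yields a (1 − 1/e)-approximation to the influence maximization problem. -/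
/-- The greedy algorithm for a monotone submodular set function `f` with `f ∅ = 0`
achieves a `(1 - 1/e)`-approximation to the cardinality-constrained maximum. -/
theorem greedy_one_sub_inv_e_approx {V : Type*} [Fintype V] [DecidableEq V]
    (f : Finset V → ℝ)
    (hmono : ∀ S T : Finset V, S ⊆ T → f S ≤ f T)
    (hsub : ∀ S T : Finset V, S ⊆ T → ∀ u ∉ T,
      f (insert u S) - f S ≥ f (insert u T) - f T)
    (hempty : f ∅ = 0)
    (k : ℕ) (hk : 1 ≤ k) (hkV : k ≤ Fintype.card V)
    (S : ℕ → Finset V) (v : ℕ → V)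
    (hS0 : S 0 = ∅)
    (hSstep : ∀ i, i < k → S (i + 1) = insert (v i) (S i))
    (hgreedy : ∀ i, i < k → ∀ u : V,
      f (insert u (S i)) - f (S i) ≤ f (insert (v i) (S i)) - f (S i))
    (T : Finset V) (hT : T.card ≤ k) :
    f (S k) ≥ (1 - 1 / Real.exp 1) * f T := by
  have hk0 : (0:ℝ) < k := by exact_mod_cast Nat.pos_of_ne_zero (by omega)
  have hfac : (0:ℝ) ≤ 1 - 1/k := by
    have h1 : (1:ℝ) ≤ k := by exact_mod_cast hk
    have h2 : 1/(k:ℝ) ≤ 1 := by rw [div_le_one hk0]; exact h1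
    linarith
  have hTnn : 0 ≤ f T := hempty ▸ hmono ∅ T (Finset.empty_subset T)
  -- submodularity telescoping
  have key : ∀ A B : Finset V, f (A ∪ B) - f A ≤ ∑ u ∈ B, (f (insert u A) - f A) := by
    intro A B
    induction B using Finset.induction_on with
    | empty => simp
    | @insert u B hu ih =>
      have h1 : f (insert u (A ∪ B)) - f (A ∪ B) ≤ f (insert u A) - f A := by
        by_cases huAB : u ∈ A ∪ B
        · rw [Finset.insert_eq_self.mpr huAB]
          have := hmono A (insert u A) (Finset.subset_insert _ _)
          linarith
        · exact hsub A (A ∪ B) Finset.subset_union_left u huAB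
      rw [Finset.union_insert, Finset.sum_insert hu]
      linarith
  have hgain_nonneg : ∀ i, i < k → 0 ≤ f (S (i+1)) - f (S i) := by
    intro i hi
    rw [hSstep i hi]
    have := hmono (S i) (insert (v i) (S i)) (Finset.subset_insert _ _)
    linarith
  have step : ∀ i, i < k → f T - f (S i) ≤ k * (f (S (i+1)) - f (S i)) := by
    intro i hi
    have h1 : f T ≤ f (S i ∪ T) := hmono T (S i ∪ T) Finset.subset_union_right
    have h2 := key (S i) T
    have h3 : ∑ u ∈ T, (f (insert u (S i)) - f (S i))
        ≤ T.card * (f (S (i+1)) - f (S i)) := by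
      calc ∑ u ∈ T, (f (insert u (S i)) - f (S i))
          ≤ ∑ _u ∈ T, (f (S (i+1)) - f (S i)) := by
            apply Finset.sum_le_sum
            intro u _
            rw [hSstep i hi]
            exact hgreedy i hi u
        _ = T.card * (f (S (i+1)) - f (S i)) := by
            rw [Finset.sum_const, nsmul_eq_mul]
    have h4 : (T.card : ℝ) * (f (S (i+1)) - f (S i)) ≤ k * (f (S (i+1)) - f (S i)) := by
      apply mul_le_mul_of_nonneg_right _ (hgain_nonneg i hi)
      exact_mod_cast hT
    linarith
  have decay : ∀ i, i ≤ k → f T - f (S i) ≤ (1 - 1/(k:ℝ))^i * f T := by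
    intro i
    induction i with
    | zero => intro _; simp [hS0, hempty]
    | succ i ih =>
      intro hik
      have hi : i < k := by omega
      have hdi := ih (le_of_lt hi)
      have hstep := step i hi
      have hmain : f T - f (S (i+1)) ≤ (1 - 1/(k:ℝ)) * (f T - f (S i)) := by
        have hgk : (f T - f (S i)) / k ≤ f (S (i+1)) - f (S i) := by
          rw [div_le_iff₀ hk0]; linarith
        have heq : (1 - 1/(k:ℝ)) * (f T - f (S i))
            = (f T - f (S i)) - (f T - f (S i))/k := by
          field_simp
        linarith
      calc f T - f (S (i+1)) ≤ (1 - 1/(k:ℝ)) * (f T - f (S i)) := hmain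
        _ ≤ (1 - 1/(k:ℝ)) * ((1 - 1/(k:ℝ))^i * f T) := by
            exact mul_le_mul_of_nonneg_left hdi hfac
        _ = (1 - 1/(k:ℝ))^(i+1) * f T := by ring
  have hpow : (1 - 1/(k:ℝ))^k ≤ 1 / Real.exp 1 := by
    have h1 : (1 - 1/(k:ℝ)) ≤ Real.exp (-(1/k)) := by
      have := Real.add_one_le_exp (-(1/(k:ℝ)))
      linarith
    have h2 : (1 - 1/(k:ℝ))^k ≤ (Real.exp (-(1/(k:ℝ))))^k :=
      pow_le_pow_left₀ hfac h1 k
    have h3 : (Real.exp (-(1/(k:ℝ))))^k = Real.exp (-1) := by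
      rw [← Real.exp_nat_mul]
      congr 1
      field_simp
    calc (1 - 1/(k:ℝ))^k ≤ (Real.exp (-(1/(k:ℝ))))^k := h2
      _ = Real.exp (-1) := h3
      _ = 1 / Real.exp 1 := by rw [Real.exp_neg, one_div]
  have hd := decay k le_rfl
  have hfinal : f T - f (S k) ≤ (1/Real.exp 1) * f T :=
    le_trans hd (mul_le_mul_of_nonneg_right hpow hTnn)
  have : (1 - 1/Real.exp 1) * f T = f T - (1/Real.exp 1) * f T := by ring
  linarith
end
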